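/- arXiv:2605.17692 — 5 statements merged into one kernel-verified Lean document; each statement's English description precedes it below -/
import Mathlib

section
/- A symmetric matrix W ∈ S_+^d of size d×d satisfies rank(W) ≤ r if and only if there exists W' ∈ S^d with tr(W') = r, 0 ⪯ W' ⪯ I, and ⟨W, I − W'⟩ ≤ 0. -/
/-!
If `rank W ≤ r`, diagonalize `W` and take for `W'` the orthogonal projection onto `r`
eigenvectors containing all those with nonzero eigenvalue; then `W W' = W`.
Conversely, `⟨W, I - W'⟩` is the trace of a product of two positive semidefinite matrices,
so it is nonnegative and vanishes only if `W (I - W') = 0`. Hence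
`rank W + rank (I - W') ≤ d`, while `0 ⪯ I - W' ⪯ I` forces
`rank (I - W') ≥ tr (I - W') = d - r`.
-/

open Matrix

namespace Matrix

open scoped MatrixOrder ComplexOrder

variable {n 𝕜 : Type*} [Fintype n] [RCLike 𝕜] {A B : Matrix n n 𝕜}

theorem PosSemidef.exists_eq_conjTranspose_mul_self (hA : A.PosSemidef) :
    ∃ C : Matrix n n 𝕜, A = Cᴴ * C := by
  classical
  exact CStarAlgebra.nonneg_iff_eq_star_mul_self.mp hA.nonneg

theorem trace_conjTranspose_mul_self_mul_conjTranspose_mul_self (R S : Matrix n n 𝕜) :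
    (Rᴴ * R * (Sᴴ * S)).trace = ((R * Sᴴ)ᴴ * (R * Sᴴ)).trace := by
  rw [conjTranspose_mul, conjTranspose_conjTranspose, ← Matrix.mul_assoc, trace_mul_comm]
  simp only [Matrix.mul_assoc]

theorem PosSemidef.trace_mul_nonneg (hA : A.PosSemidef) (hB : B.PosSemidef) :
    0 ≤ (A * B).trace := by
  obtain ⟨R, rfl⟩ := hA.exists_eq_conjTranspose_mul_self
  obtain ⟨S, rfl⟩ := hB.exists_eq_conjTranspose_mul_self
  rw [trace_conjTranspose_mul_self_mul_conjTranspose_mul_self]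
  exact (posSemidef_conjTranspose_mul_self _).trace_nonneg

theorem PosSemidef.mul_eq_zero_of_trace_mul_eq_zero (hA : A.PosSemidef) (hB : B.PosSemidef)
    (h : (A * B).trace = 0) : A * B = 0 := by
  obtain ⟨R, rfl⟩ := hA.exists_eq_conjTranspose_mul_self
  obtain ⟨S, rfl⟩ := hB.exists_eq_conjTranspose_mul_self
  rw [trace_conjTranspose_mul_self_mul_conjTranspose_mul_self,
    trace_conjTranspose_mul_self_eq_zero_iff] at h
  calc Rᴴ * R * (Sᴴ * S) = Rᴴ * (R * Sᴴ) * S := by simp only [Matrix.mul_assoc]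
    _ = 0 := by rw [h, Matrix.mul_zero, Matrix.zero_mul]

theorem _root_.IsStarProjection.posSemidef (hA : IsStarProjection A) : A.PosSemidef :=
  nonneg_iff_posSemidef.mp hA.nonneg

variable [DecidableEq n]

theorem IsHermitian.eigenvalues_le_one (hA : A.IsHermitian) (h : (1 - A).PosSemidef) (i : n) :
    hA.eigenvalues i ≤ 1 := by
  have hdiag : Unitary.conjStarAlgAut 𝕜 _ (star hA.eigenvectorUnitary) (1 - A) =
      diagonal (fun j => 1 - (hA.eigenvalues j : 𝕜)) := by
    rw [map_sub, map_one, hA.conjStarAlgAut_star_eigenvectorUnitary, ← diagonal_one,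
      diagonal_sub]
    rfl
  have hpsd := h.mul_mul_conjTranspose_same
    ((star hA.eigenvectorUnitary : unitary (Matrix n n 𝕜)) : Matrix n n 𝕜)
  rw [← star_eq_conjTranspose, ← Unitary.conjStarAlgAut_apply (S := 𝕜), hdiag,
    posSemidef_diagonal_iff] at hpsd
  exact_mod_cast sub_nonneg.mp (hpsd i)

theorem PosSemidef.trace_le_rank (hA : A.PosSemidef) (h : (1 - A).PosSemidef) :
    A.trace ≤ A.rank := by
  set μ := hA.1.eigenvalues
  have hμ (i : n) : μ i ≤ if μ i ≠ 0 then 1 else 0 := by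
    split_ifs with hi
    · exact hA.1.eigenvalues_le_one h i
    · exact (not_not.mp hi).le
  calc A.trace = ((∑ i, μ i : ℝ) : 𝕜) := by rw [hA.1.trace_eq_sum_eigenvalues]; push_cast; rfl
    _ ≤ ((∑ i, if μ i ≠ 0 then 1 else 0 : ℝ) : 𝕜) :=
      RCLike.ofReal_le_ofReal.mpr (Finset.sum_le_sum fun i _ => hμ i)
    _ = A.rank := by
      rw [hA.1.rank_eq_card_non_zero_eigs, Fintype.card_subtype, Finset.sum_boole]
      simp [μ]

theorem trace_conjStarAlgAut (U : unitary (Matrix n n 𝕜)) (B : Matrix n n 𝕜) :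
    (Unitary.conjStarAlgAut 𝕜 _ U B).trace = B.trace := by
  rw [Unitary.conjStarAlgAut_apply, trace_mul_cycle, Unitary.coe_star_mul_self, Matrix.one_mul]

theorem isStarProjection_diagonal_indicator (T : Finset n) :
    IsStarProjection (diagonal fun i => if i ∈ T then (1 : 𝕜) else 0) where
  isIdempotentElem := by
    rw [IsIdempotentElem, diagonal_mul_diagonal]
    congr 1 with i
    split_ifs <;> simp [*]
  isSelfAdjoint := by
    rw [IsSelfAdjoint, star_eq_conjTranspose, diagonal_conjTranspose]
    congr 1 with i
    split_ifs <;> simp [*]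

theorem IsHermitian.exists_isStarProjection_mul_eq_self (hA : A.IsHermitian) {r : ℕ}
    (hrank : A.rank ≤ r) (hr : r ≤ Fintype.card n) :
    ∃ P : Matrix n n 𝕜, IsStarProjection P ∧ P.trace = r ∧ A * P = A := by
  rw [hA.rank_eq_card_non_zero_eigs, Fintype.card_subtype] at hrank
  obtain ⟨T, hsupp, -, hT⟩ := Finset.exists_subsuperset_card_eq
    (Finset.subset_univ (Finset.univ.filter fun i => hA.eigenvalues i ≠ 0)) hrank
    (by rwa [Finset.card_univ])
  set conj := Unitary.conjStarAlgAut 𝕜 _ hA.eigenvectorUnitary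
  refine ⟨conj (diagonal fun i => if i ∈ T then 1 else 0),
    (isStarProjection_diagonal_indicator T).map conj, ?_, ?_⟩
  · rw [trace_conjStarAlgAut, trace_diagonal, Finset.sum_boole]
    simp [hT]
  · conv_lhs => rw [hA.spectral_theorem]
    conv_rhs => rw [hA.spectral_theorem]
    rw [← map_mul, diagonal_mul_diagonal]
    congr 2 with i
    by_cases hi : hA.eigenvalues i = 0
    · simp [hi]
    · simp [hsupp (Finset.mem_filter.mpr ⟨Finset.mem_univ i, hi⟩)]

end Matrix

/-- W ∈ S_+^d satisfies rank(W) ≤ r iff there exists symmetric W' with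
tr(W') = r, 0 ⪯ W' ⪯ I and ⟨W, I - W'⟩ ≤ 0. -/
theorem stmt_2 (d r : ℕ) (hr : r ≤ d) (W : Matrix (Fin d) (Fin d) ℝ)
    (hW : W.PosSemidef) :
    W.rank ≤ r ↔ ∃ W' : Matrix (Fin d) (Fin d) ℝ, W'.IsSymm ∧
      W'.trace = (r : ℝ) ∧ W'.PosSemidef ∧ (1 - W').PosSemidef ∧
      (Wᵀ * (1 - W')).trace ≤ 0 := by
  have hWt : Wᵀ = W := by simpa using hW.isHermitian.eq
  rw [hWt]
  constructor
  · intro hrank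
    obtain ⟨P, hP, htrace, hWP⟩ :=
      hW.isHermitian.exists_isStarProjection_mul_eq_self hrank (by rwa [Fintype.card_fin])
    have hPsymm : P.IsSymm := by
      rw [IsSymm, ← conjTranspose_eq_transpose_of_trivial]
      exact hP.isSelfAdjoint
    refine ⟨P, hPsymm, htrace, hP.posSemidef, hP.one_sub.posSemidef, ?_⟩
    rw [Matrix.mul_sub, hWP, Matrix.mul_one, sub_self, trace_zero]
  · rintro ⟨W', -, htrace, hW'psd, hW'le, htr⟩
    have hprod : W * (1 - W') = 0 :=
      hW.mul_eq_zero_of_trace_mul_eq_zero hW'le (le_antisymm htr (hW.trace_mul_nonneg hW'le))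
    have hsum : (W.rank : ℝ) + (1 - W').rank ≤ d := by
      exact_mod_cast (rank_add_rank_le_card_of_mul_eq_zero hprod).trans_eq (Fintype.card_fin d)
    have hcorank := hW'le.trace_le_rank (by rwa [sub_sub_cancel])
    rw [trace_sub, trace_one, htrace, Fintype.card_fin] at hcorank
    exact_mod_cast (by linarith : (W.rank : ℝ) ≤ r)
end

section
/- Let r = min_{0 ≤ k ≤ N} d_k. For every matrix M ∈ ℝ^{d_N×d_0} with rank(M) ≤ r, there exist matrices W_k ∈ ℝ^{d_k×d_{k-1}} for k = 1,…,N such that W_N ⋯ W_1 = M. Consequently, the set of products {W_N ⋯ W_1} equals the set of d_N×d_0 matrices of rank at most r. -/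
/-!
Every product `W_N ⋯ W_1` factors through each `ℝ^{d_k}`, so its rank is at most `r`.
Conversely, a matrix of rank at most `r` factors as `M = A B` through `ℝ^r`, and since every
intermediate dimension is at least `r`, the space `ℝ^r` can be passed isometrically through
`ℝ^{d_1}, …, ℝ^{d_{N-1}}`: with `E_k : ℝ^r → ℝ^{d_k}` the inclusion of the first coordinates,
`Eᵀ_k E_k = 1`, and `(A Eᵀ_{N-1}) (E_{N-1} Eᵀ_{N-2}) ⋯ (E_1 B)` telescopes to `A B`.
-/

open Matrix

/-- The product W_N ⋯ W_1 (with W_k ∈ ℝ^{d_k × d_{k-1}}). -/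
def chainProd (d : ℕ → ℕ)
    (W : ∀ k : ℕ, Matrix (Fin (d (k + 1))) (Fin (d k)) ℝ) :
    ∀ N : ℕ, Matrix (Fin (d N)) (Fin (d 0)) ℝ
  | 0 => 1
  | N + 1 => W N * chainProd d W N

theorem Matrix.exists_mul_eq_of_rank_le {K m n : Type*} [Field K] [Fintype m] [Fintype n]
    [DecidableEq m] [DecidableEq n] {r : ℕ} (M : Matrix m n K) (hM : M.rank ≤ r) :
    ∃ (A : Matrix m (Fin r) K) (B : Matrix (Fin r) n K), A * B = M := by
  set p := LinearMap.range M.mulVecLin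
  have hp : Module.finrank K p ≤ r := hM
  let j : p →ₗ[K] Fin r → K :=
    Function.ExtendByZero.linearMap K (Fin.castLE hp) ∘ₗ (Module.finBasis K p).equivFun.toLinearMap
  have hj : LinearMap.ker j = ⊥ := by
    rw [LinearMap.ker_eq_bot]
    exact (Function.extend_injective (Fin.castLE_injective hp) 0).comp (LinearEquiv.injective _)
  obtain ⟨g, hgj⟩ := j.exists_leftInverse_of_injective hj
  have hfactor : (p.subtype ∘ₗ g) ∘ₗ (j ∘ₗ M.mulVecLin.rangeRestrict) = M.mulVecLin := by
    rw [LinearMap.comp_assoc, ← LinearMap.comp_assoc _ j, hgj, LinearMap.id_comp,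
      LinearMap.subtype_comp_codRestrict]
  refine ⟨LinearMap.toMatrix' (p.subtype ∘ₗ g),
    LinearMap.toMatrix' (j ∘ₗ M.mulVecLin.rangeRestrict), ?_⟩
  rw [← LinearMap.toMatrix'_comp, hfactor, ← Matrix.toLin'_apply', LinearMap.toMatrix'_toLin']

def Matrix.rectOne (K : Type*) [Zero K] [One K] (m r : ℕ) : Matrix (Fin m) (Fin r) K :=
  of fun i j => if (i : ℕ) = j then 1 else 0

theorem Matrix.rectOne_eq_submatrix {K : Type*} [Zero K] [One K] {m r : ℕ} (h : r ≤ m) :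
    rectOne K m r = (1 : Matrix (Fin m) (Fin m) K).submatrix id (Fin.castLE h) := by
  ext i j
  simp [rectOne, one_apply, Fin.ext_iff]

theorem Matrix.rectOne_transpose_mul_self {K : Type*} [CommSemiring K] {m r : ℕ} (h : r ≤ m) :
    (rectOne K m r)ᵀ * rectOne K m r = 1 := by
  rw [rectOne_eq_submatrix h, transpose_submatrix, transpose_one,
    ← submatrix_mul _ _ _ _ _ Function.bijective_id, Matrix.one_mul,
    submatrix_one _ (Fin.castLE_injective h)]

theorem chainProd_telescope (d : ℕ → ℕ) {r n : ℕ} (L : ∀ k, Matrix (Fin (d k)) (Fin r) ℝ)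
    (R : ∀ k, Matrix (Fin r) (Fin (d k)) ℝ) (hRL : ∀ k, 0 < k → k < n → R k * L k = 1)
    (hn : 1 ≤ n) : chainProd d (fun k => L (k + 1) * R k) n = L n * R 0 := by
  induction n, hn using Nat.le_induction with
  | base => simp [chainProd]
  | succ n hn ih =>
    rw [chainProd, ih fun k hk hkn => hRL k hk (hkn.trans n.lt_add_one), Matrix.mul_assoc,
      ← Matrix.mul_assoc (R n), hRL n hn n.lt_add_one, Matrix.one_mul]

theorem chainProd_rank_le (d : ℕ → ℕ) (W : ∀ k : ℕ, Matrix (Fin (d (k + 1))) (Fin (d k)) ℝ)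
    {k n : ℕ} (hk : k ≤ n) : (chainProd d W n).rank ≤ d k := by
  induction n with
  | zero => obtain rfl := Nat.le_zero.mp hk; exact rank_le_width _
  | succ n ih =>
    rcases Nat.le_add_one_iff.mp hk with hk | rfl
    · exact (rank_mul_le_right _ _).trans (ih hk)
    · exact rank_le_height _

theorem exists_chainProd_eq_of_rank_le (d : ℕ → ℕ) {r N : ℕ} (hN : 1 ≤ N)
    (hd : ∀ k, 0 < k → k < N → r ≤ d k) (M : Matrix (Fin (d N)) (Fin (d 0)) ℝ)
    (hM : M.rank ≤ r) :
    ∃ W : ∀ k : ℕ, Matrix (Fin (d (k + 1))) (Fin (d k)) ℝ, chainProd d W N = M := by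
  obtain ⟨A, B, rfl⟩ := M.exists_mul_eq_of_rank_le hM
  let L : ∀ k, Matrix (Fin (d k)) (Fin r) ℝ := Function.update (fun k => rectOne ℝ (d k) r) N A
  let R : ∀ k, Matrix (Fin r) (Fin (d k)) ℝ :=
    Function.update (fun k => (rectOne ℝ (d k) r)ᵀ) 0 B
  refine ⟨fun k => L (k + 1) * R k, ?_⟩
  have hRL : ∀ k, 0 < k → k < N → R k * L k = 1 := fun k hk hkN => by
    simp only [R, L, Function.update_of_ne hk.ne', Function.update_of_ne hkN.ne]
    exact rectOne_transpose_mul_self (hd k hk hkN)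
  rw [chainProd_telescope d L R hRL hN]
  simp only [L, R, Function.update_self]

theorem stmt_9_general (N : ℕ) (hN : 1 ≤ N) (d : ℕ → ℕ) (r : ℕ)
    (hr : r = (Finset.range (N + 1)).inf' Finset.nonempty_range_add_one d) :
    (∀ M : Matrix (Fin (d N)) (Fin (d 0)) ℝ, M.rank ≤ r →
        ∃ W : ∀ k : ℕ, Matrix (Fin (d (k + 1))) (Fin (d k)) ℝ, chainProd d W N = M) ∧
    {M : Matrix (Fin (d N)) (Fin (d 0)) ℝ |
        ∃ W : ∀ k : ℕ, Matrix (Fin (d (k + 1))) (Fin (d k)) ℝ, chainProd d W N = M} =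
      {M : Matrix (Fin (d N)) (Fin (d 0)) ℝ | M.rank ≤ r} := by
  have hr_le : ∀ k ≤ N, r ≤ d k := fun k hk =>
    hr ▸ Finset.inf'_le d (Finset.mem_range_succ_iff.mpr hk)
  have hexists := fun M => exists_chainProd_eq_of_rank_le d hN (fun k _ hk => hr_le k hk.le) M
  refine ⟨hexists, Set.ext fun M => ⟨?_, hexists M⟩⟩
  rintro ⟨W, rfl⟩
  rw [Set.mem_ofPred_eq, hr]
  exact Finset.le_inf' _ _ fun k hk =>
    chainProd_rank_le d W (Finset.mem_range_succ_iff.mp hk)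

/-- With r = min_k d_k, every M with rank(M) ≤ r is realizable as W_N ⋯ W_1;
consequently the set of such products is exactly the set of matrices of rank ≤ r. -/
theorem stmt_9 (N : ℕ) (hN : 1 ≤ N) (d : ℕ → ℕ) (hd : ∀ k, 0 < d k) (r : ℕ)
    (hr : r = (Finset.range (N + 1)).inf' Finset.nonempty_range_add_one d) :
    (∀ M : Matrix (Fin (d N)) (Fin (d 0)) ℝ, M.rank ≤ r →
        ∃ W : ∀ k : ℕ, Matrix (Fin (d (k + 1))) (Fin (d k)) ℝ, chainProd d W N = M) ∧
    {M : Matrix (Fin (d N)) (Fin (d 0)) ℝ |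
        ∃ W : ∀ k : ℕ, Matrix (Fin (d (k + 1))) (Fin (d k)) ℝ, chainProd d W N = M} =
      {M : Matrix (Fin (d N)) (Fin (d 0)) ℝ | M.rank ≤ r} :=
  stmt_9_general N hN d r hr
end

section
/- The infimum over (W_1,…,W_N) of (1/(2n))‖W_N ⋯ W_1 X − Y‖_F² equals the infimum over U ∈ ℝ^{d_N×r}, V ∈ ℝ^{d_0×r} of (1/(2n))‖U Vᵀ X − Y‖_F², where r = min_k d_k. -/
/-!
Every end-to-end matrix `W_N ⋯ W_1` factors through the narrowest layer, so it has the form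
`U Vᵀ` with inner dimension `r`. Conversely, `U Vᵀ` is realised by a chain that maps into the
first `r` coordinates by `Vᵀ`, carries them through each intermediate layer by the isometric
embedding `ℝ^r ↪ ℝ^{d_k}` (possible since `r ≤ d_k`), and leaves by `U`. Hence both objectives
range over the same set of values.
-/

open Matrix

/-- Squared Frobenius norm: ‖M‖_F² = tr(MᵀM). -/
noncomputable def frobSq {m n : Type*} [Fintype m] [Fintype n] [DecidableEq n]
    (M : Matrix m n ℝ) : ℝ := (Mᵀ * M).trace

lemma transpose_submatrix_one_castLE_mul {α : Type*} [Semiring α] {r m : ℕ} (h : r ≤ m) :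
    ((1 : Matrix (Fin m) (Fin m) α).submatrix id (Fin.castLE h))ᵀ *
      (1 : Matrix (Fin m) (Fin m) α).submatrix id (Fin.castLE h) = 1 := by
  rw [transpose_submatrix, transpose_one, ← submatrix_mul _ _ _ _ _ Function.bijective_id,
    Matrix.mul_one, submatrix_one _ (Fin.castLE_injective h)]

section chainProd

variable {d : ℕ → ℕ}

lemma chainProd_congr {W W' : ∀ k : ℕ, Matrix (Fin (d (k + 1))) (Fin (d k)) ℝ} {N : ℕ}
    (h : ∀ k < N, W k = W' k) : chainProd d W N = chainProd d W' N := by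
  induction N with
  | zero => rfl
  | succ N ih =>
    simp only [chainProd, h N N.lt_succ_self, ih fun k hk => h k (hk.trans N.lt_succ_self)]

lemma exists_chainProd_eq_mul_chainProd (W : ∀ k : ℕ, Matrix (Fin (d (k + 1))) (Fin (d k)) ℝ)
    {k N : ℕ} (hk : k ≤ N) :
    ∃ A : Matrix (Fin (d N)) (Fin (d k)) ℝ, chainProd d W N = A * chainProd d W k := by
  induction N, hk using Nat.le_induction with
  | base => exact ⟨1, (Matrix.one_mul _).symm⟩
  | succ N _ ih =>
    obtain ⟨A, hA⟩ := ih
    exact ⟨W N * A, by rw [chainProd, hA, Matrix.mul_assoc]⟩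

lemma exists_chainProd_eq_mul_transpose {r k : ℕ} (hk : 1 ≤ k) (hr : ∀ j ≤ k, r ≤ d j)
    (U : Matrix (Fin (d k)) (Fin r) ℝ) (V : Matrix (Fin (d 0)) (Fin r) ℝ) :
    ∃ W : ∀ j : ℕ, Matrix (Fin (d (j + 1))) (Fin (d j)) ℝ, chainProd d W k = U * Vᵀ := by
  induction k, hk using Nat.le_induction with
  | base =>
    refine ⟨Function.update 0 0 (U * Vᵀ), ?_⟩
    rw [chainProd, Function.update_self, chainProd, Matrix.mul_one]
  | succ k _ ih =>
    let E := (1 : Matrix (Fin (d k)) (Fin (d k)) ℝ).submatrix id (Fin.castLE (hr k k.le_succ))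
    obtain ⟨W, hW⟩ := ih (fun j hj => hr j (hj.trans k.le_succ)) E
    refine ⟨Function.update W k (U * Eᵀ), ?_⟩
    have hprefix : chainProd d (Function.update W k (U * Eᵀ)) k = chainProd d W k :=
      chainProd_congr fun j hj => Function.update_of_ne hj.ne _ _
    rw [chainProd, hprefix, Function.update_self, hW, Matrix.mul_assoc, ← Matrix.mul_assoc Eᵀ,
      transpose_submatrix_one_castLE_mul, Matrix.one_mul]

lemma exists_chainProd_eq_iff {N r : ℕ} (hN : 1 ≤ N)
    (hr : r = (Finset.range (N + 1)).inf' Finset.nonempty_range_add_one d)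
    (M : Matrix (Fin (d N)) (Fin (d 0)) ℝ) :
    (∃ W, chainProd d W N = M) ↔
      ∃ (U : Matrix (Fin (d N)) (Fin r) ℝ) (V : Matrix (Fin (d 0)) (Fin r) ℝ), M = U * Vᵀ := by
  constructor
  · rintro ⟨W, rfl⟩
    obtain ⟨k, hk, hdk⟩ := Finset.exists_mem_eq_inf' Finset.nonempty_range_add_one d
    obtain rfl : r = d k := hr.trans hdk
    obtain ⟨A, hA⟩ :=
      exists_chainProd_eq_mul_chainProd W (Nat.lt_succ_iff.mp (Finset.mem_range.mp hk))
    exact ⟨A, (chainProd d W k)ᵀ, by rw [hA, transpose_transpose]⟩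
  · rintro ⟨U, V, rfl⟩
    have hle : ∀ j ≤ N, r ≤ d j := fun j hj =>
      hr ▸ Finset.inf'_le d (Finset.mem_range.mpr (Nat.lt_succ_of_le hj))
    exact exists_chainProd_eq_mul_transpose hN hle U V

end chainProd

theorem stmt_10_general (N n : ℕ) (hN : 1 ≤ N) (d : ℕ → ℕ)
    (r : ℕ) (hr : r = (Finset.range (N + 1)).inf' Finset.nonempty_range_add_one d)
    (X : Matrix (Fin (d 0)) (Fin n) ℝ) (Y : Matrix (Fin (d N)) (Fin n) ℝ) :
    sInf {c : ℝ | ∃ W : ∀ k : ℕ, Matrix (Fin (d (k + 1))) (Fin (d k)) ℝ,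
        c = (1 / (2 * n)) * frobSq (chainProd d W N * X - Y)} =
    sInf {c : ℝ | ∃ (U : Matrix (Fin (d N)) (Fin r) ℝ)
        (V : Matrix (Fin (d 0)) (Fin r) ℝ),
        c = (1 / (2 * n)) * frobSq (U * Vᵀ * X - Y)} := by
  congr 1
  ext c
  constructor
  · rintro ⟨W, rfl⟩
    obtain ⟨U, V, hUV⟩ := (exists_chainProd_eq_iff hN hr _).mp ⟨W, rfl⟩
    exact ⟨U, V, by rw [hUV]⟩
  · rintro ⟨U, V, rfl⟩
    obtain ⟨W, hW⟩ := (exists_chainProd_eq_iff hN hr _).mpr ⟨U, V, rfl⟩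
    exact ⟨W, by rw [hW]⟩

/-- The deep-linear-network training objective has the same infimum as the shallow
factorized objective with bottleneck width r = min_k d_k. -/
theorem stmt_10 (N n : ℕ) (hN : 1 ≤ N) (hn : 1 ≤ n) (d : ℕ → ℕ) (hd : ∀ k, 0 < d k)
    (r : ℕ) (hr : r = (Finset.range (N + 1)).inf' Finset.nonempty_range_add_one d)
    (X : Matrix (Fin (d 0)) (Fin n) ℝ) (Y : Matrix (Fin (d N)) (Fin n) ℝ) :
    sInf {c : ℝ | ∃ W : ∀ k : ℕ, Matrix (Fin (d (k + 1))) (Fin (d k)) ℝ,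
        c = (1 / (2 * n)) * frobSq (chainProd d W N * X - Y)} =
    sInf {c : ℝ | ∃ (U : Matrix (Fin (d N)) (Fin r) ℝ)
        (V : Matrix (Fin (d 0)) (Fin r) ℝ),
        c = (1 / (2 * n)) * frobSq (U * Vᵀ * X - Y)} :=
  stmt_10_general N n hN d r hr X Y
end

section
/- The infimum of (1/(2n))‖U Vᵀ X − Y‖_F² over U ∈ ℝ^{d_N×r}, V ∈ ℝ^{d_0×r} equals the infimum of (1/(2n))‖P_uᵀ W P_v X − Y‖_F² over symmetric positive semidefinite W ∈ S_+^{d_N+d_0} with rank(W) ≤ r, where P_u = [I_{d_N}; 0] and P_v = [0; I_{d_0}] are the block selection matrices. -/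
open Matrix

/-- Block selection matrix P_u = [I_{dN}; 0]. -/
def Pu (dN d0 : ℕ) : Matrix (Fin dN ⊕ Fin d0) (Fin dN) ℝ :=
  fun i j => if i = Sum.inl j then 1 else 0

/-- Block selection matrix P_v = [0; I_{d0}]. -/
def Pv (dN d0 : ℕ) : Matrix (Fin dN ⊕ Fin d0) (Fin d0) ℝ :=
  fun i j => if i = Sum.inr j then 1 else 0

namespace Matrix

variable {m n p R : Type*} [Fintype n]

theorem exists_mul_transpose_eq_of_embedding [CommSemiring R] [DecidableEq n] [Fintype p]
    [DecidableEq p] (B : Matrix m n R) (e : n ↪ p) : ∃ C : Matrix m p R, C * Cᵀ = B * Bᵀ := by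
  -- the rows of the 0/1 matrix of `e` are orthonormal
  refine ⟨B * (1 : Matrix p p R).submatrix e id, ?_⟩
  rw [transpose_mul, transpose_submatrix, transpose_one, Matrix.mul_assoc,
    ← Matrix.mul_assoc _ (submatrix 1 id e), ← submatrix_mul _ _ _ _ _ Function.bijective_id,
    Matrix.mul_one, submatrix_one_embedding, Matrix.one_mul]

theorem submatrix_val_mul_transpose_of_apply_eq_zero [NonUnitalNonAssocSemiring R]
    (B : Matrix m n R) {P : n → Prop} [DecidablePred P] (hB : ∀ i j, ¬P j → B i j = 0) :
    B.submatrix id (Subtype.val : {j // P j} → n) *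
      (B.submatrix id (Subtype.val : {j // P j} → n))ᵀ = B * Bᵀ := by
  refine Matrix.ext fun i k => ?_
  simp only [Matrix.mul_apply, submatrix_apply, transpose_apply, id]
  rw [← Finset.sum_subtype {j | P j} (by simp) fun j => B i j * B k j, Finset.sum_filter_of_ne]
  intro j _ hj
  by_contra hP
  simp [hB i j hP] at hj

theorem PosSemidef.exists_eq_mul_transpose_of_rank_le [DecidableEq n] {W : Matrix n n ℝ}
    (hW : W.PosSemidef) {r : ℕ} (hr : W.rank ≤ r) :
    ∃ B : Matrix n (Fin r) ℝ, W = B * Bᵀ := by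
  set hH := hW.isHermitian
  set Q : Matrix n n ℝ := ↑hH.eigenvectorUnitary
  set B := Q * diagonal fun i => √(hH.eigenvalues i)
  have hWB : W = B * Bᵀ := by
    have hspec : W = Q * diagonal (RCLike.ofReal ∘ hH.eigenvalues) * star Q :=
      hH.spectral_theorem
    have hsq : (diagonal fun i => √(hH.eigenvalues i)) * diagonal (fun i => √(hH.eigenvalues i))
        = diagonal (RCLike.ofReal ∘ hH.eigenvalues) := by
      rw [diagonal_mul_diagonal]
      congr 1
      funext i
      exact Real.mul_self_sqrt (hW.eigenvalues_nonneg i)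
    rw [hspec, ← hsq, star_eq_conjTranspose, conjTranspose_eq_transpose_of_trivial]
    simp only [B, transpose_mul, diagonal_transpose, Matrix.mul_assoc]
  have hcard : Fintype.card {i // hH.eigenvalues i ≠ 0} ≤ Fintype.card (Fin r) := by
    rwa [← hH.rank_eq_card_non_zero_eigs, Fintype.card_fin]
  obtain ⟨e⟩ := Function.Embedding.nonempty_of_card_le hcard
  obtain ⟨C, hC⟩ := exists_mul_transpose_eq_of_embedding
    (B.submatrix id (Subtype.val : {i // hH.eigenvalues i ≠ 0} → n)) e
  refine ⟨C, ?_⟩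
  rw [hC, submatrix_val_mul_transpose_of_apply_eq_zero B (P := fun i => hH.eigenvalues i ≠ 0), hWB]
  intro i j hj
  simp [B, mul_apply, diagonal_apply, not_not.1 hj]

end Matrix

section BlockSelection

variable {dN d0 k : ℕ}

theorem pu_transpose_mul_fromRows (U : Matrix (Fin dN) (Fin k) ℝ) (V : Matrix (Fin d0) (Fin k) ℝ) :
    (Pu dN d0)ᵀ * fromRows U V = U := by
  refine Matrix.ext fun i j => ?_
  simp [Pu, Matrix.mul_apply]

theorem transpose_fromRows_mul_pv (U : Matrix (Fin dN) (Fin k) ℝ) (V : Matrix (Fin d0) (Fin k) ℝ) :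
    (fromRows U V)ᵀ * Pv dN d0 = Vᵀ := by
  refine Matrix.ext fun i j => ?_
  simp [Pv, Matrix.mul_apply]

theorem pu_transpose_mul_fromRows_mul_transpose_mul_pv (U : Matrix (Fin dN) (Fin k) ℝ)
    (V : Matrix (Fin d0) (Fin k) ℝ) :
    (Pu dN d0)ᵀ * (fromRows U V * (fromRows U V)ᵀ) * Pv dN d0 = U * Vᵀ := by
  rw [← Matrix.mul_assoc, pu_transpose_mul_fromRows, Matrix.mul_assoc, transpose_fromRows_mul_pv]

theorem exists_posSemidef_rank_le_pu_mul_pv_eq_iff (r : ℕ)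
    (M : Matrix (Fin dN) (Fin d0) ℝ) :
    (∃ W : Matrix (Fin dN ⊕ Fin d0) (Fin dN ⊕ Fin d0) ℝ,
        W.PosSemidef ∧ W.rank ≤ r ∧ (Pu dN d0)ᵀ * W * Pv dN d0 = M) ↔
      ∃ (U : Matrix (Fin dN) (Fin r) ℝ) (V : Matrix (Fin d0) (Fin r) ℝ), U * Vᵀ = M := by
  constructor
  · rintro ⟨W, hW, hWr, rfl⟩
    obtain ⟨B, rfl⟩ := hW.exists_eq_mul_transpose_of_rank_le hWr
    rw [← fromRows_toRows B, pu_transpose_mul_fromRows_mul_transpose_mul_pv]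
    exact ⟨_, _, rfl⟩
  · rintro ⟨U, V, rfl⟩
    refine ⟨fromRows U V * (fromRows U V)ᵀ, ?_, ?_,
      pu_transpose_mul_fromRows_mul_transpose_mul_pv U V⟩
    · simpa using posSemidef_self_mul_conjTranspose (fromRows U V)
    · exact (rank_mul_le_left _ _).trans <| (rank_le_card_width _).trans_eq (Fintype.card_fin r)

end BlockSelection

theorem stmt_11_general (dN d0 n r : ℕ)
    (X : Matrix (Fin d0) (Fin n) ℝ) (Y : Matrix (Fin dN) (Fin n) ℝ) :
    sInf {c : ℝ | ∃ (U : Matrix (Fin dN) (Fin r) ℝ) (V : Matrix (Fin d0) (Fin r) ℝ),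
        c = (1 / (2 * n)) * frobSq (U * Vᵀ * X - Y)} =
    sInf {c : ℝ | ∃ W : Matrix (Fin dN ⊕ Fin d0) (Fin dN ⊕ Fin d0) ℝ,
        W.PosSemidef ∧ W.rank ≤ r ∧
        c = (1 / (2 * n)) * frobSq ((Pu dN d0)ᵀ * W * Pv dN d0 * X - Y)} := by
  congr 1
  ext c
  constructor
  · rintro ⟨U, V, rfl⟩
    obtain ⟨W, hW, hWr, hUV⟩ :=
      (exists_posSemidef_rank_le_pu_mul_pv_eq_iff r (U * Vᵀ)).2 ⟨U, V, rfl⟩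
    exact ⟨W, hW, hWr, by rw [hUV]⟩
  · rintro ⟨W, hW, hWr, rfl⟩
    obtain ⟨U, V, hUV⟩ := (exists_posSemidef_rank_le_pu_mul_pv_eq_iff r _).1 ⟨W, hW, hWr, rfl⟩
    exact ⟨U, V, by rw [hUV]⟩

/-- The shallow factorized objective has the same infimum as the rank-constrained
semidefinite formulation. -/
theorem stmt_11 (dN d0 n r : ℕ) (hn : 1 ≤ n)
    (X : Matrix (Fin d0) (Fin n) ℝ) (Y : Matrix (Fin dN) (Fin n) ℝ) :
    sInf {c : ℝ | ∃ (U : Matrix (Fin dN) (Fin r) ℝ) (V : Matrix (Fin d0) (Fin r) ℝ),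
        c = (1 / (2 * n)) * frobSq (U * Vᵀ * X - Y)} =
    sInf {c : ℝ | ∃ W : Matrix (Fin dN ⊕ Fin d0) (Fin dN ⊕ Fin d0) ℝ,
        W.PosSemidef ∧ W.rank ≤ r ∧
        c = (1 / (2 * n)) * frobSq ((Pu dN d0)ᵀ * W * Pv dN d0 * X - Y)} :=
  stmt_11_general dN d0 n r X Y
end

section
/- Let K ⊂ ℝ^p be a closed convex cone and CP_K = conv{z zᵀ : z ∈ K}. For any vector a ∈ ℝ^p and scalar b, if a matrix [[1, zᵀ],[z, Z]] ∈ CP_{ℝ_+ × K} (the completely positive cone over the augmented cone, with the (1,1) entry equal to 1) satisfies aᵀ z = b and ⟨a aᵀ, Z⟩ = b², then in every decomposition into rank-one atoms generated by (1, z_i) with z_i ∈ K, each atom satisfies aᵀ z_i = b. -/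
/-!
Under the weights `λ_i` the numbers `aᵀ z_i` have mean `aᵀ z = b` and second moment
`⟨a aᵀ, Z⟩ = b²`, so their variance `∑ λ_i (aᵀ z_i - b)²` vanishes; every term with `λ_i > 0`
must then be zero.
-/

open Matrix

theorem Finset.sum_mul_sub_sq_eq {ι : Type*} (s : Finset ι) (w x : ι → ℝ) (b : ℝ) :
    ∑ i ∈ s, w i * (x i - b) ^ 2 =
      ∑ i ∈ s, w i * x i ^ 2 - 2 * b * ∑ i ∈ s, w i * x i + b ^ 2 * ∑ i ∈ s, w i := by
  simp only [Finset.mul_sum, ← Finset.sum_sub_distrib, ← Finset.sum_add_distrib]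
  exact Finset.sum_congr rfl fun i _ => by ring

theorem Finset.eq_of_weighted_mean_sq_eq {ι : Type*} {s : Finset ι} {w x : ι → ℝ} {b : ℝ}
    (hw : ∀ i ∈ s, 0 ≤ w i) (hw1 : ∑ i ∈ s, w i = 1)
    (h1 : ∑ i ∈ s, w i * x i = b) (h2 : ∑ i ∈ s, w i * x i ^ 2 = b ^ 2)
    {i : ι} (hi : i ∈ s) (hwi : 0 < w i) : x i = b := by
  have hvar : ∑ j ∈ s, w j * (x j - b) ^ 2 = 0 := by
    rw [Finset.sum_mul_sub_sq_eq, h1, h2, hw1]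
    ring
  have hterm : w i * (x i - b) ^ 2 = 0 :=
    (Finset.sum_eq_zero_iff_of_nonneg fun j hj => mul_nonneg (hw j hj) (sq_nonneg _)).mp
      hvar i hi
  have hsq : (x i - b) ^ 2 = 0 := (mul_eq_zero.mp hterm).resolve_left hwi.ne'
  exact sub_eq_zero.mp (pow_eq_zero_iff two_ne_zero |>.mp hsq)

theorem Matrix.trace_transpose_vecMulVec_mul_vecMulVec {n R : Type*} [Fintype n] [CommSemiring R]
    (a v : n → R) : ((vecMulVec a a)ᵀ * vecMulVec v v).trace = (a ⬝ᵥ v) ^ 2 := by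
  rw [transpose_vecMulVec, vecMulVec_mul_vecMulVec, trace_vecMulVec, dotProduct_smul,
    smul_eq_mul, sq]

theorem stmt_19_general (p : ℕ)
    (a : Fin p → ℝ) (b : ℝ) (z : Fin p → ℝ) (Z : Matrix (Fin p) (Fin p) ℝ)
    (n : ℕ) (lam : Fin n → ℝ) (zi : Fin n → Fin p → ℝ)
    (hlam : ∀ i, 0 ≤ lam i)
    (hsum1 : ∑ i, lam i = 1)
    (hz : z = ∑ i, lam i • zi i)
    (hZ : Z = ∑ i, lam i • vecMulVec (zi i) (zi i))
    (haz : a ⬝ᵥ z = b)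
    (haZ : ((vecMulVec a a)ᵀ * Z).trace = b ^ 2) :
    ∀ i, 0 < lam i → a ⬝ᵥ zi i = b := by
  have hmean : ∑ i, lam i * (a ⬝ᵥ zi i) = b := by
    simpa only [hz, dotProduct_sum, dotProduct_smul, smul_eq_mul] using haz
  have hsecond : ∑ i, lam i * (a ⬝ᵥ zi i) ^ 2 = b ^ 2 := by
    simpa only [hZ, Matrix.mul_sum, Matrix.mul_smul, trace_sum, trace_smul,
      trace_transpose_vecMulVec_mul_vecMulVec, smul_eq_mul] using haZ
  exact fun i hi => Finset.eq_of_weighted_mean_sq_eq (fun j _ => hlam j) hsum1 hmean hsecond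
    (Finset.mem_univ i) hi

/-- Variance argument: if a CP matrix [[1, zᵀ],[z, Z]] over the augmented cone
ℝ₊ × K satisfies aᵀz = b and ⟨aaᵀ, Z⟩ = b², then in every decomposition into
rank-one atoms generated by (1, z_i), z_i ∈ K, each atom with positive weight
satisfies aᵀ z_i = b. -/
theorem stmt_19 (p : ℕ) (K : Set (Fin p → ℝ)) (hclosed : IsClosed K)
    (hconv : Convex ℝ K) (hcone : ∀ c : ℝ, 0 ≤ c → ∀ z ∈ K, c • z ∈ K)
    (a : Fin p → ℝ) (b : ℝ) (z : Fin p → ℝ) (Z : Matrix (Fin p) (Fin p) ℝ)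
    (n : ℕ) (lam : Fin n → ℝ) (zi : Fin n → Fin p → ℝ)
    (hlam : ∀ i, 0 ≤ lam i) (hzi : ∀ i, zi i ∈ K)
    (hsum1 : ∑ i, lam i = 1)
    (hz : z = ∑ i, lam i • zi i)
    (hZ : Z = ∑ i, lam i • vecMulVec (zi i) (zi i))
    (haz : a ⬝ᵥ z = b)
    (haZ : ((vecMulVec a a)ᵀ * Z).trace = b ^ 2) :
    ∀ i, 0 < lam i → a ⬝ᵥ zi i = b :=
  stmt_19_general p a b z Z n lam zi hlam hsum1 hz hZ haz haZ
end
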